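/- arXiv:1408.1376 — 3 statements merged into one kernel-verified Lean document; each statement's English description precedes it below -/
import Mathlib

section
/- If C is a block-diagonal matrix with blocks A and B on the diagonal (and zeros elsewhere), then γ₂(C) = max{γ₂(A), γ₂(B)}. -/
open Matrix Real

/-- `‖B‖_{2→∞}`: the largest Euclidean norm of a row of `B`. -/
noncomputable def rowNorm {m n : Type*} [Fintype m] [Fintype n] (B : Matrix m n ℝ) : ℝ :=
  ⨆ i, Real.sqrt (∑ j, B i j ^ 2)

/-- `‖C‖_{1→2}`: the largest Euclidean norm of a column of `C`. -/
noncomputable def colNorm {m n : Type*} [Fintype m] [Fintype n] (C : Matrix m n ℝ) : ℝ :=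
  ⨆ j, Real.sqrt (∑ i, C i j ^ 2)

/-- The `γ₂` factorization norm of a real matrix. -/
noncomputable def gamma2 {m n : Type*} [Fintype m] [Fintype n] (A : Matrix m n ℝ) : ℝ :=
  sInf {t | ∃ (k : ℕ) (B : Matrix m (Fin k) ℝ) (C : Matrix (Fin k) n ℝ),
    A = B * C ∧ t = rowNorm B * colNorm C}

section Aux

variable {m n : Type*} [Fintype m] [Fintype n]

lemma iSup_sum_max {α β : Type*} [Fintype α] [Fintype β] (f : α ⊕ β → ℝ)
    (hf : ∀ x, 0 ≤ f x) :
    (⨆ x, f x) = max (⨆ a, f (Sum.inl a)) (⨆ b, f (Sum.inr b)) := by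
  apply le_antisymm
  · rcases isEmpty_or_nonempty (α ⊕ β) with h | h
    · rw [Real.iSup_of_isEmpty]
      exact le_max_of_le_left (Real.iSup_nonneg fun a => hf _)
    · refine ciSup_le fun x => ?_
      cases x with
      | inl a =>
        exact le_max_of_le_left
          (le_ciSup (f := fun a => f (Sum.inl a)) (Set.Finite.bddAbove (Set.finite_range _)) a)
      | inr b =>
        exact le_max_of_le_right
          (le_ciSup (f := fun b => f (Sum.inr b)) (Set.Finite.bddAbove (Set.finite_range _)) b)
  · apply max_le
    · rcases isEmpty_or_nonempty α with h | h
      · rw [Real.iSup_of_isEmpty]; exact Real.iSup_nonneg hf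
      · exact ciSup_le fun a =>
          le_ciSup (Set.Finite.bddAbove (Set.finite_range _)) (Sum.inl a)
    · rcases isEmpty_or_nonempty β with h | h
      · rw [Real.iSup_of_isEmpty]; exact Real.iSup_nonneg hf
      · exact ciSup_le fun b =>
          le_ciSup (Set.Finite.bddAbove (Set.finite_range _)) (Sum.inr b)

lemma mySup_comp_le {α β : Type*} [Fintype α] [Fintype β] (f : β → ℝ)
    (hf : ∀ x, 0 ≤ f x) (g : α → β) : (⨆ a, f (g a)) ≤ ⨆ b, f b := by
  rcases isEmpty_or_nonempty α with h | h
  · rw [Real.iSup_of_isEmpty]; exact Real.iSup_nonneg hf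
  · exact ciSup_le fun a => le_ciSup (f := f) (Set.Finite.bddAbove (Set.finite_range f)) (g a)

lemma rowNorm_nonneg (B : Matrix m n ℝ) : 0 ≤ rowNorm B :=
  Real.iSup_nonneg fun _ => Real.sqrt_nonneg _

lemma colNorm_eq_rowNorm (C : Matrix m n ℝ) : colNorm C = rowNorm Cᵀ := rfl

lemma colNorm_nonneg (C : Matrix m n ℝ) : 0 ≤ colNorm C :=
  Real.iSup_nonneg fun _ => Real.sqrt_nonneg _

lemma sqrt_row_le_rowNorm (B : Matrix m n ℝ) (i : m) :
    Real.sqrt (∑ j, B i j ^ 2) ≤ rowNorm B :=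
  le_ciSup (f := fun i => Real.sqrt (∑ j, B i j ^ 2))
    (Set.Finite.bddAbove (Set.finite_range _)) i

lemma rowNorm_eq_zero {B : Matrix m n ℝ} (h : rowNorm B = 0) : B = 0 := by
  ext i j
  have h1 : Real.sqrt (∑ j, B i j ^ 2) = 0 :=
    le_antisymm (h ▸ sqrt_row_le_rowNorm B i) (Real.sqrt_nonneg _)
  have h2 : (∑ j, B i j ^ 2) = 0 := by
    have hs : 0 ≤ ∑ j, B i j ^ 2 := Finset.sum_nonneg fun _ _ => sq_nonneg _
    have := Real.sqrt_eq_zero'.mp h1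
    linarith
  have h3 := (Finset.sum_eq_zero_iff_of_nonneg fun j _ => sq_nonneg (B i j)).mp h2
  have := h3 j (Finset.mem_univ j)
  simpa using pow_eq_zero_iff (n := 2) (by norm_num) |>.mp this

lemma colNorm_eq_zero {C : Matrix m n ℝ} (h : colNorm C = 0) : C = 0 := by
  rw [colNorm_eq_rowNorm] at h
  have := rowNorm_eq_zero h
  ext i j
  have := congrFun (congrFun this j) i
  simpa using this

lemma rowNorm_zero : rowNorm (0 : Matrix m n ℝ) = 0 := by
  unfold rowNorm
  simp

lemma colNorm_zero : colNorm (0 : Matrix m n ℝ) = 0 := by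
  unfold colNorm
  simp

lemma rowNorm_smul (B : Matrix m n ℝ) {s : ℝ} (hs : 0 ≤ s) :
    rowNorm (s • B) = s * rowNorm B := by
  unfold rowNorm
  rw [Real.mul_iSup_of_nonneg hs]
  refine iSup_congr fun i => ?_
  have : ∑ j, (s • B) i j ^ 2 = s ^ 2 * ∑ j, B i j ^ 2 := by
    rw [Finset.mul_sum]
    refine Finset.sum_congr rfl fun j _ => by
      simp [Matrix.smul_apply, mul_pow]
  rw [this, Real.sqrt_mul (sq_nonneg s), Real.sqrt_sq hs]

lemma colNorm_smul (C : Matrix m n ℝ) {s : ℝ} (hs : 0 ≤ s) :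
    colNorm (s • C) = s * colNorm C := by
  rw [colNorm_eq_rowNorm, colNorm_eq_rowNorm, Matrix.transpose_smul, rowNorm_smul _ hs]

lemma rowNorm_submatrix_le {m' : Type*} [Fintype m'] (M : Matrix m n ℝ) (g : m' → m) :
    rowNorm (M.submatrix g id) ≤ rowNorm M :=
  mySup_comp_le (fun i => Real.sqrt (∑ j, M i j ^ 2)) (fun _ => Real.sqrt_nonneg _) g

lemma colNorm_submatrix_le {n' : Type*} [Fintype n'] (M : Matrix m n ℝ) (g : n' → n) :
    colNorm (M.submatrix id g) ≤ colNorm M := by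
  rw [colNorm_eq_rowNorm, colNorm_eq_rowNorm, Matrix.transpose_submatrix]
  exact rowNorm_submatrix_le Mᵀ g

lemma rowNorm_submatrix_equiv {n' : Type*} [Fintype n'] (M : Matrix m n ℝ) (e : n' ≃ n) :
    rowNorm (M.submatrix id e) = rowNorm M := by
  unfold rowNorm
  refine iSup_congr fun i => ?_
  congr 1
  exact Equiv.sum_comp e fun j => M i j ^ 2

lemma colNorm_submatrix_equiv {m' : Type*} [Fintype m'] (M : Matrix m n ℝ) (e : m' ≃ m) :
    colNorm (M.submatrix e id) = colNorm M := by
  rw [colNorm_eq_rowNorm, colNorm_eq_rowNorm, Matrix.transpose_submatrix]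
  exact rowNorm_submatrix_equiv Mᵀ e

lemma rowNorm_fromBlocks {m₁ m₂ n₁ n₂ : Type*} [Fintype m₁] [Fintype m₂] [Fintype n₁]
    [Fintype n₂] (B₁ : Matrix m₁ n₁ ℝ) (B₂ : Matrix m₂ n₂ ℝ) :
    rowNorm (Matrix.fromBlocks B₁ 0 0 B₂) = max (rowNorm B₁) (rowNorm B₂) := by
  unfold rowNorm
  rw [iSup_sum_max _ (fun _ => Real.sqrt_nonneg _)]
  congr 1
  · refine iSup_congr fun i => ?_
    congr 1
    rw [Fintype.sum_sum_type]
    simp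
  · refine iSup_congr fun i => ?_
    congr 1
    rw [Fintype.sum_sum_type]
    simp

lemma colNorm_fromBlocks {m₁ m₂ n₁ n₂ : Type*} [Fintype m₁] [Fintype m₂] [Fintype n₁]
    [Fintype n₂] (C₁ : Matrix m₁ n₁ ℝ) (C₂ : Matrix m₂ n₂ ℝ) :
    colNorm (Matrix.fromBlocks C₁ 0 0 C₂) = max (colNorm C₁) (colNorm C₂) := by
  rw [colNorm_eq_rowNorm, Matrix.fromBlocks_transpose]
  simp only [Matrix.transpose_zero]
  rw [rowNorm_fromBlocks, ← colNorm_eq_rowNorm, ← colNorm_eq_rowNorm]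

/-- The factorization set. -/
def gammaSet (M : Matrix m n ℝ) : Set ℝ :=
  {t | ∃ (k : ℕ) (B : Matrix m (Fin k) ℝ) (C : Matrix (Fin k) n ℝ),
    M = B * C ∧ t = rowNorm B * colNorm C}

lemma gamma2_eq (M : Matrix m n ℝ) : gamma2 M = sInf (gammaSet M) := rfl

lemma gammaSet_bddBelow (M : Matrix m n ℝ) : BddBelow (gammaSet M) := by
  refine ⟨0, fun t ht => ?_⟩
  obtain ⟨k, B, C, -, rfl⟩ := ht
  exact mul_nonneg (rowNorm_nonneg B) (colNorm_nonneg C)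

lemma gammaSet_nonempty [DecidableEq n] (M : Matrix m n ℝ) :
    (gammaSet M).Nonempty := by
  classical
  let e : Fin (Fintype.card n) ≃ n := (Fintype.equivFin n).symm
  refine ⟨_, Fintype.card n, M.submatrix id e, (1 : Matrix n n ℝ).submatrix e id, ?_, rfl⟩
  rw [Matrix.submatrix_mul_equiv]
  simp

/-- Balancing a factorization. -/
lemma balance {k : ℕ} (B : Matrix m (Fin k) ℝ) (C : Matrix (Fin k) n ℝ) :
    ∃ (B' : Matrix m (Fin k) ℝ) (C' : Matrix (Fin k) n ℝ),
      B' * C' = B * C ∧ rowNorm B' = colNorm C' ∧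
      rowNorm B' ^ 2 ≤ rowNorm B * colNorm C := by
  rcases eq_or_lt_of_le (rowNorm_nonneg B) with hr | hr
  · refine ⟨0, 0, ?_, ?_, ?_⟩
    · rw [rowNorm_eq_zero hr.symm]
      simp
    · rw [rowNorm_zero, colNorm_zero]
    · rw [rowNorm_zero]
      simpa using mul_nonneg (rowNorm_nonneg B) (colNorm_nonneg C)
  rcases eq_or_lt_of_le (colNorm_nonneg C) with hc | hc
  · refine ⟨0, 0, ?_, ?_, ?_⟩
    · rw [colNorm_eq_zero hc.symm]
      simp
    · rw [rowNorm_zero, colNorm_zero]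
    · rw [rowNorm_zero]
      simpa using mul_nonneg (rowNorm_nonneg B) (colNorm_nonneg C)
  · have hspos : 0 < Real.sqrt (colNorm C / rowNorm B) :=
      Real.sqrt_pos.mpr (div_pos hc hr)
    have h1 : Real.sqrt (colNorm C / rowNorm B) * rowNorm B =
        Real.sqrt (colNorm C * rowNorm B) := by
      nth_rewrite 2 [← Real.sqrt_sq (le_of_lt hr)]
      rw [← Real.sqrt_mul (div_nonneg hc.le hr.le)]
      congr 1
      field_simp
    have h2 : (Real.sqrt (colNorm C / rowNorm B))⁻¹ * colNorm C =
        Real.sqrt (colNorm C * rowNorm B) := by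
      rw [← Real.sqrt_inv, inv_div]
      nth_rewrite 2 [← Real.sqrt_sq (le_of_lt hc)]
      rw [← Real.sqrt_mul (div_nonneg hr.le hc.le)]
      congr 1
      field_simp
    refine ⟨Real.sqrt (colNorm C / rowNorm B) • B,
      (Real.sqrt (colNorm C / rowNorm B))⁻¹ • C, ?_, ?_, ?_⟩
    · rw [Matrix.smul_mul, Matrix.mul_smul, smul_smul,
        mul_inv_cancel₀ (ne_of_gt hspos), one_smul]
    · rw [rowNorm_smul _ hspos.le, colNorm_smul _ (inv_nonneg.mpr hspos.le), h1, h2]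
    · rw [rowNorm_smul _ hspos.le, h1, Real.sq_sqrt (mul_nonneg hc.le hr.le), mul_comm]

lemma max_sq (a b : ℝ) (ha : 0 ≤ a) (hb : 0 ≤ b) :
    max a b ^ 2 = max (a ^ 2) (b ^ 2) := by
  rcases le_total a b with h | h
  · rw [max_eq_right h, max_eq_right (pow_le_pow_left₀ ha h 2)]
  · rw [max_eq_left h, max_eq_left (pow_le_pow_left₀ hb h 2)]

end Aux

/-- Key: given factorizations of `A` and `B`, the block matrix's `γ₂` is at most the
max of the factorization values. -/
lemma gamma2_fromBlocks_le_max {m₁ n₁ m₂ n₂ : ℕ}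
    (A : Matrix (Fin m₁) (Fin n₁) ℝ) (B : Matrix (Fin m₂) (Fin n₂) ℝ)
    {k₁ k₂ : ℕ} (B₁ : Matrix (Fin m₁) (Fin k₁) ℝ) (C₁ : Matrix (Fin k₁) (Fin n₁) ℝ)
    (B₂ : Matrix (Fin m₂) (Fin k₂) ℝ) (C₂ : Matrix (Fin k₂) (Fin n₂) ℝ)
    (hA : A = B₁ * C₁) (hB : B = B₂ * C₂) :
    gamma2 (Matrix.fromBlocks A 0 0 B) ≤
      max (rowNorm B₁ * colNorm C₁) (rowNorm B₂ * colNorm C₂) := by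
  obtain ⟨B₁', C₁', hfac₁, hbal₁, hle₁⟩ := balance B₁ C₁
  obtain ⟨B₂', C₂', hfac₂, hbal₂, hle₂⟩ := balance B₂ C₂
  set e : Fin k₁ ⊕ Fin k₂ ≃ Fin (k₁ + k₂) := finSumFinEquiv
  set Bb : Matrix (Fin m₁ ⊕ Fin m₂) (Fin (k₁ + k₂)) ℝ :=
    (Matrix.fromBlocks B₁' 0 0 B₂').submatrix id e.symm with hBb
  set Cb : Matrix (Fin (k₁ + k₂)) (Fin n₁ ⊕ Fin n₂) ℝ :=
    (Matrix.fromBlocks C₁' 0 0 C₂').submatrix e.symm id with hCb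
  have hprod : Matrix.fromBlocks A 0 0 B = Bb * Cb := by
    rw [hBb, hCb, Matrix.submatrix_mul_equiv, Matrix.fromBlocks_multiply]
    simp [hA, hB, hfac₁, hfac₂]
  have hmem : rowNorm Bb * colNorm Cb ∈ gammaSet (Matrix.fromBlocks A 0 0 B) :=
    ⟨k₁ + k₂, Bb, Cb, hprod, rfl⟩
  have hval : rowNorm Bb * colNorm Cb ≤
      max (rowNorm B₁ * colNorm C₁) (rowNorm B₂ * colNorm C₂) := by
    have hr : rowNorm Bb = max (rowNorm B₁') (rowNorm B₂') := by
      rw [hBb, rowNorm_submatrix_equiv, rowNorm_fromBlocks]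
    have hc : colNorm Cb = max (colNorm C₁') (colNorm C₂') := by
      rw [hCb, colNorm_submatrix_equiv, colNorm_fromBlocks]
    rw [hr, hc, ← hbal₁, ← hbal₂, ← sq,
      max_sq _ _ (rowNorm_nonneg B₁') (rowNorm_nonneg B₂')]
    exact max_le_max hle₁ hle₂
  exact le_trans (csInf_le (gammaSet_bddBelow _) hmem) hval

/-- γ₂ of a block-diagonal matrix is the max of the γ₂ of the blocks. -/
theorem gamma2_fromBlocks {m₁ n₁ m₂ n₂ : ℕ}
    (A : Matrix (Fin m₁) (Fin n₁) ℝ) (B : Matrix (Fin m₂) (Fin n₂) ℝ) :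
    gamma2 (Matrix.fromBlocks A 0 0 B) = max (gamma2 A) (gamma2 B) := by
  apply le_antisymm
  · by_contra h
    push_neg at h
    have hA : sInf (gammaSet A) < gamma2 (Matrix.fromBlocks A 0 0 B) :=
      lt_of_le_of_lt (le_max_left _ (gamma2 B)) h
    have hB : sInf (gammaSet B) < gamma2 (Matrix.fromBlocks A 0 0 B) :=
      lt_of_le_of_lt (le_max_right (gamma2 A) _) h
    obtain ⟨t₁, ht₁, hlt₁⟩ := exists_lt_of_csInf_lt (gammaSet_nonempty A) hA
    obtain ⟨t₂, ht₂, hlt₂⟩ := exists_lt_of_csInf_lt (gammaSet_nonempty B) hB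
    obtain ⟨k₁, B₁, C₁, hfac₁, rfl⟩ := ht₁
    obtain ⟨k₂, B₂, C₂, hfac₂, rfl⟩ := ht₂
    have := gamma2_fromBlocks_le_max A B B₁ C₁ B₂ C₂ hfac₁ hfac₂
    have hmax : max (rowNorm B₁ * colNorm C₁) (rowNorm B₂ * colNorm C₂) <
        gamma2 (Matrix.fromBlocks A 0 0 B) := max_lt hlt₁ hlt₂
    linarith
  · apply max_le
    · refine le_csInf (gammaSet_nonempty _) ?_
      rintro t ⟨k, Bf, Cf, hfac, rfl⟩
      have hA : A = Bf.submatrix Sum.inl id * Cf.submatrix id Sum.inl := by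
        ext i j
        have := congrFun (congrFun hfac (Sum.inl i)) (Sum.inl j)
        simpa [Matrix.mul_apply] using this
      have h1 : gamma2 A ≤ rowNorm (Bf.submatrix Sum.inl id) *
          colNorm (Cf.submatrix id Sum.inl) :=
        csInf_le (gammaSet_bddBelow _) ⟨k, _, _, hA, rfl⟩
      refine le_trans h1 (mul_le_mul (rowNorm_submatrix_le Bf Sum.inl)
        (colNorm_submatrix_le Cf Sum.inl) (colNorm_nonneg _) (rowNorm_nonneg _))
    · refine le_csInf (gammaSet_nonempty _) ?_
      rintro t ⟨k, Bf, Cf, hfac, rfl⟩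
      have hB : B = Bf.submatrix Sum.inr id * Cf.submatrix id Sum.inr := by
        ext i j
        have := congrFun (congrFun hfac (Sum.inr i)) (Sum.inr j)
        simpa [Matrix.mul_apply] using this
      have h1 : gamma2 B ≤ rowNorm (Bf.submatrix Sum.inr id) *
          colNorm (Cf.submatrix id Sum.inr) :=
        csInf_le (gammaSet_bddBelow _) ⟨k, _, _, hB, rfl⟩
      refine le_trans h1 (mul_le_mul (rowNorm_submatrix_le Bf Sum.inr)
        (colNorm_submatrix_le Cf Sum.inr) (colNorm_nonneg _) (rowNorm_nonneg _))
end

section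
/- The nuclear norm of the n×n lower triangular all-ones matrix Tₙ satisfies (1/n)·‖Tₙ‖_* = Ω(log n); in particular (1/n)‖Tₙ‖_* ≥ ((2n+1)/(πn))·Σ_{j=1}^{n} 1/(2j−1). -/
/-!
`Tₙ` is the cumulative-sum operator, so `TₙᵀTₙ` applied to the vector `(cos ((2k+1)x))ₖ` reduces to
two telescoping sums: it returns the same vector scaled by `1 / (4 sin² x)` as soon as
`cos ((2n+1)x) = 0`. The `n` angles `θⱼ = (2j+1)π/(4n+2)` give `n` distinct such eigenvalues, so the
eigenvectors form an invertible matrix and these are all the eigenvalues of `TₙᵀTₙ`. Hence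
`‖Tₙ‖_* = Σ 1/(2 sin θⱼ) ≥ Σ 1/(2θⱼ)`, and the odd harmonic sum `Σ 1/(2j+1)` is at least
`½ log (2n+1)` by telescoping `log (1 + t) ≤ t`.
-/

open Matrix Real

/-- `Tₙ`: the n×n lower triangular all-ones matrix. -/
def T (n : ℕ) : Matrix (Fin n) (Fin n) ℝ :=
  Matrix.of fun i j => if j ≤ i then 1 else 0

/-- The nuclear norm of a square real matrix. -/
noncomputable def nuclearNorm {k : Type*} [Fintype k] [DecidableEq k]
    (B : Matrix k k ℝ) : ℝ :=
  ∑ i, Real.sqrt ((show (Bᵀ * B).IsHermitian by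
    simpa [Matrix.conjTranspose_eq_transpose_of_trivial] using
      Matrix.isHermitian_conjTranspose_mul_self B).eigenvalues i)

open Finset

theorem Matrix.isUnit_of_mul_eq_mul_diagonal {n K : Type*} [Fintype n] [DecidableEq n] [Field K]
    {A M : Matrix n n K} {d : n → K} (hAM : A * M = M * diagonal d)
    (hd : Function.Injective d) (hM : ∀ j, M.col j ≠ 0) : IsUnit M := by
  refine linearIndependent_cols_iff_isUnit.1 <|
    Module.End.eigenvectors_linearIndependent' (toLin' A) d hd M.col fun j => ⟨?_, hM j⟩
  rw [Module.End.mem_eigenspace_iff, toLin'_apply]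
  ext i
  have := congrFun (congrFun hAM i) j
  rw [mul_diagonal, mul_apply] at this
  simpa [mulVec, dotProduct, mul_comm] using this

open Polynomial in
theorem Matrix.IsHermitian.map_eigenvalues_eq {n : Type*} [Fintype n] [DecidableEq n]
    {A M : Matrix n n ℝ} (hA : A.IsHermitian) {d : n → ℝ} (hAM : A * M = M * diagonal d)
    (hM : IsUnit M) : univ.val.map hA.eigenvalues = univ.val.map d := by
  have hconj : A = hM.unit.val * diagonal d * hM.unit.val⁻¹ := by
    rw [IsUnit.unit_spec, ← hAM, mul_assoc,
      mul_nonsing_inv _ ((isUnit_iff_isUnit_det M).1 hM), mul_one]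
  have := hA.roots_charpoly_eq_eigenvalues
  rw [show A.charpoly = _ by rw [hconj], charpoly_units_conj, charpoly_diagonal,
    roots_prod _ _ (by simp [Finset.prod_ne_zero_iff, X_sub_C_ne_zero])] at this
  simpa using this.symm

theorem nuclearNorm_eq_sum_sqrt {k : Type*} [Fintype k] [DecidableEq k] {B M : Matrix k k ℝ}
    {d : k → ℝ} (hBM : Bᵀ * B * M = M * diagonal d) (hM : IsUnit M) :
    nuclearNorm B = ∑ i, √(d i) := by
  have hB : (Bᵀ * B).IsHermitian := by
    simpa using isHermitian_conjTranspose_mul_self B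
  have h := congrArg (fun s => (s.map Real.sqrt).sum) (hB.map_eigenvalues_eq hBM hM)
  simp only [Multiset.map_map, Function.comp_def, sum_map_val] at h
  exact h

namespace Real

theorem two_mul_sin_mul_sum_range_cos (x : ℝ) (m : ℕ) :
    2 * sin x * ∑ k ∈ range m, cos ((2 * k + 1) * x) = sin (2 * m * x) := by
  rw [mul_sum]
  convert sum_range_sub (fun k : ℕ => sin (2 * k * x)) m using 2 with k
  · rw [two_mul_sin_mul_cos, show x - (2 * k + 1) * x = -(2 * k * x) by ring, sin_neg]
    push_cast; ring_nf
  · simp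

theorem two_mul_sin_mul_sum_Ico_sin (x : ℝ) {i m : ℕ} (h : i ≤ m) :
    2 * sin x * ∑ k ∈ Ico i m, sin (2 * (k + 1) * x) =
      cos ((2 * i + 1) * x) - cos ((2 * m + 1) * x) := by
  rw [mul_sum, ← neg_sub, ← sum_Ico_sub (fun k : ℕ => cos ((2 * k + 1) * x)) h,
    ← sum_neg_distrib]
  refine sum_congr rfl fun k _ => ?_
  rw [two_mul_sin_mul_sin, show x - 2 * (k + 1) * x = -((2 * k + 1) * x) by ring, cos_neg]
  push_cast; ring_nf

end Real

section Triangular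

variable {n : ℕ}

theorem T_mulVec_apply (f : ℕ → ℝ) (i : Fin n) :
    (T n *ᵥ fun k => f k) i = ∑ k ∈ range (i + 1), f k := by
  simp only [mulVec, dotProduct, T, of_apply, ite_mul, one_mul, zero_mul, Fin.le_iff_val_le_val]
  rw [Fin.sum_univ_eq_sum_range (fun k => if k ≤ (i : ℕ) then f k else 0), ← sum_filter]
  congr 1
  ext k
  simp only [mem_filter, mem_range]
  omega

theorem T_transpose_mulVec_apply (f : ℕ → ℝ) (i : Fin n) :
    ((T n)ᵀ *ᵥ fun k => f k) i = ∑ k ∈ Ico (i : ℕ) n, f k := by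
  simp only [mulVec, dotProduct, transpose_apply, T, of_apply, ite_mul, one_mul, zero_mul,
    Fin.le_iff_val_le_val]
  rw [Fin.sum_univ_eq_sum_range (fun k => if (i : ℕ) ≤ k then f k else 0), ← sum_filter]
  congr 1
  ext k
  simp only [mem_filter, mem_range, mem_Ico]
  omega

noncomputable def cosVec (n : ℕ) (x : ℝ) : Fin n → ℝ := fun k => cos ((2 * k + 1) * x)

theorem T_transpose_mul_T_mulVec_cosVec {x : ℝ} (hx : sin x ≠ 0)
    (hcos : cos ((2 * n + 1) * x) = 0) :
    ((T n)ᵀ * T n) *ᵥ cosVec n x = (4 * sin x ^ 2)⁻¹ • cosVec n x := by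
  have hT : T n *ᵥ cosVec n x = fun k : Fin n => sin (2 * ((k : ℕ) + 1) * x) / (2 * sin x) := by
    funext k
    unfold cosVec
    rw [T_mulVec_apply (fun m => cos ((2 * m + 1) * x)), eq_div_iff (by positivity),
      mul_comm, Real.two_mul_sin_mul_sum_range_cos]
    push_cast; ring_nf
  funext i
  have h := Real.two_mul_sin_mul_sum_Ico_sin x i.2.le
  rw [hcos, sub_zero] at h
  rw [← mulVec_mulVec, hT, T_transpose_mulVec_apply (fun m => sin (2 * (m + 1) * x) / (2 * sin x)),
    ← sum_div, Pi.smul_apply, smul_eq_mul, cosVec, ← h]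
  generalize ∑ k ∈ Ico (i : ℕ) n, sin (2 * ((k : ℝ) + 1) * x) = S
  field_simp
  ring

/-- `tAngle n j` is the paper's angle `(2j−1)π/(4n+2)` with `j` shifted to start at `0`. -/
noncomputable def tAngle (n j : ℕ) : ℝ := (2 * j + 1) * π / (2 * (2 * n + 1))

theorem tAngle_pos (n j : ℕ) : 0 < tAngle n j := by
  unfold tAngle; positivity

theorem tAngle_lt_pi_div_two {j : ℕ} (hj : j < n) : tAngle n j < π / 2 := by
  have hj' : (j : ℝ) + 1 ≤ n := by exact_mod_cast hj
  unfold tAngle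
  rw [div_lt_div_iff₀ (by positivity) two_pos]
  nlinarith [pi_pos]

theorem cos_two_mul_add_one_mul_tAngle (n j : ℕ) : cos ((2 * n + 1) * tAngle n j) = 0 := by
  rw [cos_eq_zero_iff]
  refine ⟨j, ?_⟩
  unfold tAngle
  field_simp
  push_cast; ring

theorem sin_tAngle_pos {j : ℕ} (hj : j < n) : 0 < sin (tAngle n j) :=
  sin_pos_of_pos_of_lt_pi (tAngle_pos n j) ((tAngle_lt_pi_div_two hj).trans (by linarith [pi_pos]))

theorem sin_tAngle_strictMono : StrictMono fun j : Fin n => sin (tAngle n j) := by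
  intro j k hjk
  have hmem : ∀ j : Fin n, tAngle n j ∈ Set.Icc (-(π / 2)) (π / 2) := fun j =>
    ⟨by linarith [tAngle_pos n j, pi_pos], (tAngle_lt_pi_div_two j.2).le⟩
  refine strictMonoOn_sin (hmem j) (hmem k) ?_
  unfold tAngle
  gcongr
  exact_mod_cast hjk

noncomputable def cosMatrix (n : ℕ) : Matrix (Fin n) (Fin n) ℝ :=
  of fun k j => cosVec n (tAngle n j) k

theorem T_transpose_mul_T_mul_cosMatrix :
    (T n)ᵀ * T n * cosMatrix n =
      cosMatrix n * diagonal fun j : Fin n => (4 * sin (tAngle n j) ^ 2)⁻¹ := by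
  ext i j
  have := congrFun (T_transpose_mul_T_mulVec_cosVec (sin_tAngle_pos j.2).ne'
    (cos_two_mul_add_one_mul_tAngle n j)) i
  rw [mul_diagonal]
  simpa [mulVec, dotProduct, mul_apply, cosMatrix, mul_comm] using this

theorem isUnit_cosMatrix : IsUnit (cosMatrix n) := by
  refine isUnit_of_mul_eq_mul_diagonal T_transpose_mul_T_mul_cosMatrix (fun j k hjk => ?_) ?_
  · have hsq : sin (tAngle n j) ^ 2 = sin (tAngle n k) ^ 2 := by simpa using hjk
    exact sin_tAngle_strictMono.injective <|
      (sq_eq_sq₀ (sin_tAngle_pos j.2).le (sin_tAngle_pos k.2).le).1 hsq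
  · intro j hj
    have h0 : cos (tAngle n j) = 0 := by simpa [cosMatrix, cosVec] using congrFun hj ⟨0, j.pos⟩
    exact (cos_pos_of_mem_Ioo ⟨by linarith [tAngle_pos n j, pi_pos],
      tAngle_lt_pi_div_two j.2⟩).ne' h0

theorem nuclearNorm_T : nuclearNorm (T n) = ∑ j : Fin n, (2 * sin (tAngle n j))⁻¹ := by
  rw [nuclearNorm_eq_sum_sqrt T_transpose_mul_T_mul_cosMatrix isUnit_cosMatrix]
  refine sum_congr rfl fun j _ => ?_
  rw [sqrt_inv, show 4 * sin (tAngle n j) ^ 2 = (2 * sin (tAngle n j)) ^ 2 by ring,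
    sqrt_sq (by linarith [sin_tAngle_pos j.2])]

end Triangular

theorem sum_inv_odd_le_nuclearNorm_T (n : ℕ) :
    (2 * n + 1) / π * ∑ j ∈ range n, 1 / (2 * (j : ℝ) + 1) ≤ nuclearNorm (T n) := by
  rw [nuclearNorm_T, mul_sum, ← Fin.sum_univ_eq_sum_range]
  gcongr with j
  have hsin := sin_tAngle_pos j.2
  calc (2 * n + 1) / π * (1 / (2 * ((j : ℕ) : ℝ) + 1)) = (2 * tAngle n j)⁻¹ := by
        unfold tAngle; field_simp
    _ ≤ (2 * sin (tAngle n j))⁻¹ := by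
        gcongr; exact sin_le (tAngle_pos n j).le

theorem log_two_mul_add_one_le_sum_inv_odd (n : ℕ) :
    log (2 * n + 1) ≤ 2 * ∑ j ∈ range n, 1 / (2 * (j : ℝ) + 1) := by
  have hlog : log (2 * n + 1) = ∑ j ∈ range n, (log (2 * (j + 1 : ℕ) + 1) - log (2 * j + 1)) := by
    rw [sum_range_sub (fun j : ℕ => log (2 * j + 1))]; simp
  rw [hlog, mul_sum]
  refine sum_le_sum fun j _ => ?_
  rw [← log_div (by positivity) (by positivity)]
  calc _ ≤ (2 * ((j + 1 : ℕ) : ℝ) + 1) / (2 * j + 1) - 1 := log_le_sub_one_of_pos (by positivity)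
    _ = 2 * (1 / (2 * (j : ℝ) + 1)) := by field_simp; push_cast; ring

/-- `(1/n)‖Tₙ‖_* = Ω(log n)`; in particular
`(1/n)‖Tₙ‖_* ≥ ((2n+1)/(πn))·Σ_{j=1}^n 1/(2j−1)`. -/
theorem nuclear_T_lower_bound :
    (∃ c : ℝ, 0 < c ∧ ∀ n : ℕ, 2 ≤ n →
      c * Real.log n ≤ (1 / (n : ℝ)) * nuclearNorm (T n)) ∧
    ∀ n : ℕ, 1 ≤ n →
      ((2 * (n : ℝ) + 1) / (Real.pi * n)) * ∑ j ∈ Finset.range n, 1 / (2 * (j : ℝ) + 1)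
        ≤ (1 / (n : ℝ)) * nuclearNorm (T n) := by
  have hbound : ∀ n : ℕ,
      ((2 * (n : ℝ) + 1) / (π * n)) * ∑ j ∈ range n, 1 / (2 * (j : ℝ) + 1)
        ≤ (1 / (n : ℝ)) * nuclearNorm (T n) := fun n =>
    calc _ = 1 / (n : ℝ) * ((2 * n + 1) / π * ∑ j ∈ range n, 1 / (2 * (j : ℝ) + 1)) := by ring
      _ ≤ _ := by gcongr; exact sum_inv_odd_le_nuclearNorm_T n
  refine ⟨⟨π⁻¹, inv_pos.2 pi_pos, fun n hn => ?_⟩, fun n _ => hbound n⟩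
  have hn0 : (0 : ℝ) < n := by positivity
  calc π⁻¹ * log n ≤ π⁻¹ * (2 * ∑ j ∈ range n, 1 / (2 * (j : ℝ) + 1)) := by
        gcongr
        exact (log_le_log hn0 (by linarith)).trans (log_two_mul_add_one_le_sum_inv_odd n)
    _ ≤ ((2 * (n : ℝ) + 1) / (π * n)) * ∑ j ∈ range n, 1 / (2 * (j : ℝ) + 1) := by
        rw [← mul_assoc]
        gcongr
        rw [le_div_iff₀ (by positivity)]
        field_simp
        linarith
    _ ≤ _ := hbound n
end

section
/- The discrepancy of the system of all subsets of [n] equals ⌈n/2⌉; consequently, since its incidence matrix A (with m = 2ⁿ rows) satisfies γ₂(A) ≤ √n, there exist m×n matrices with disc(A) ≥ Ω(√(log m))·γ₂(A). -/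
open Matrix Real

/-- The combinatorial discrepancy of a real matrix. -/
noncomputable def disc {m n : Type*} [Fintype m] [Fintype n] (A : Matrix m n ℝ) : ℝ :=
  sInf {t | ∃ x : n → ℝ, (∀ j, x j = 1 ∨ x j = -1) ∧ t = ⨆ i, |A.mulVec x i|}

/-- The incidence matrix of the system of all subsets of `[n]`; it has `m = 2ⁿ` rows. -/
noncomputable def allSubsetsMatrix (n : ℕ) : Matrix (Finset (Fin n)) (Fin n) ℝ :=
  Matrix.of fun s j => if j ∈ s then 1 else 0

lemma card_filter_lt (n k : ℕ) (h : k ≤ n) :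
    (Finset.univ.filter fun j : Fin n => (j:ℕ) < k).card = k := by
  have : (Finset.univ.filter fun j : Fin n => (j:ℕ) < k)
      = (Finset.range k).attachFin (fun m hm => (Finset.mem_range.mp hm).trans_le h) := by
    ext a; simp [Finset.mem_attachFin]
  rw [this, Finset.card_attachFin, Finset.card_range]

lemma mulVec_eq {n : ℕ} (x : Fin n → ℝ) (s : Finset (Fin n)) :
    (allSubsetsMatrix n).mulVec x s = ∑ j ∈ s, x j := by
  simp [allSubsetsMatrix, mulVec, dotProduct, ite_mul, Finset.sum_ite_mem]

lemma sum_pm {n : ℕ} (x : Fin n → ℝ) (h : ∀ j, x j = 1 ∨ x j = -1) (s : Finset (Fin n)) :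
    ∑ j ∈ s, x j = ((s.filter (fun j => x j = 1)).card : ℝ)
      - ((s.filter (fun j => x j = -1)).card : ℝ) := by
  rw [← Finset.sum_filter_add_sum_filter_not s (fun j => x j = 1)]
  have h2 : s.filter (fun j => ¬ x j = 1) = s.filter (fun j => x j = -1) := by
    apply Finset.filter_congr; intro j _; rcases h j with h' | h' <;> simp [h'] <;> norm_num
  have h1 : ∑ j ∈ s.filter (fun j => x j = 1), x j
      = ((s.filter (fun j => x j = 1)).card : ℝ) := by
    rw [Finset.sum_congr rfl (fun j hj => (Finset.mem_filter.mp hj).2)]; simp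
  have h3 : ∑ j ∈ s.filter (fun j => ¬ x j = 1), x j
      = -((s.filter (fun j => x j = -1)).card : ℝ) := by
    rw [h2, Finset.sum_congr rfl (fun j hj => (Finset.mem_filter.mp hj).2)]; simp
  rw [h1, h3]; ring

lemma disc_eq (n : ℕ) : disc (allSubsetsMatrix n) = (((n+1)/2 : ℕ) : ℝ) := by
  set k := (n+1)/2 with hk
  have hkn : k ≤ n := by omega
  have hbdd : BddBelow {t | ∃ x : Fin n → ℝ, (∀ j, x j = 1 ∨ x j = -1)
      ∧ t = ⨆ i, |(allSubsetsMatrix n).mulVec x i|} := by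
    refine ⟨0, ?_⟩
    rintro t ⟨y, hy, rfl⟩
    exact Real.iSup_nonneg fun i => abs_nonneg _
  apply le_antisymm
  · -- choose balanced x
    set x : Fin n → ℝ := fun j => if (j : ℕ) < k then 1 else -1 with hx
    have hxpm : ∀ j, x j = 1 ∨ x j = -1 := fun j => by
      by_cases h : (j:ℕ) < k <;> simp [hx, h]
    refine csInf_le_of_le hbdd ⟨x, hxpm, rfl⟩ ?_
    refine Real.iSup_le (fun s => ?_) (by positivity)
    rw [mulVec_eq, sum_pm x hxpm s]
    have hP : ((s.filter fun j => x j = 1).card : ℝ) ≤ k := by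
      have h1 : (s.filter fun j => x j = 1).card
          ≤ (Finset.univ.filter fun j : Fin n => x j = 1).card :=
        Finset.card_le_card (Finset.filter_subset_filter _ (Finset.subset_univ s))
      have h2 : (Finset.univ.filter fun j : Fin n => x j = 1).card = k := by
        have : (Finset.univ.filter fun j : Fin n => x j = 1)
            = Finset.univ.filter fun j : Fin n => (j:ℕ) < k := by
          apply Finset.filter_congr; intro j _
          by_cases h : (j:ℕ) < k <;> simp [hx, h] <;> norm_num
        rw [this, card_filter_lt n k hkn]
      exact_mod_cast h1.trans_eq h2
    have hN : ((s.filter fun j => x j = -1).card : ℝ) ≤ k := by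
      have h1 : (s.filter fun j => x j = -1).card
          ≤ (Finset.univ.filter fun j : Fin n => x j = -1).card :=
        Finset.card_le_card (Finset.filter_subset_filter _ (Finset.subset_univ s))
      have h2 : (Finset.univ.filter fun j : Fin n => x j = -1).card = n - k := by
        have : (Finset.univ.filter fun j : Fin n => x j = -1)
            = Finset.univ.filter fun j : Fin n => ¬ (j:ℕ) < k := by
          apply Finset.filter_congr; intro j _
          by_cases h : (j:ℕ) < k <;> simp [hx, h] <;> norm_num
        have h3 := Finset.card_filter_add_card_filter_not
          (s := (Finset.univ : Finset (Fin n))) (p := fun j : Fin n => (j:ℕ) < k)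
        rw [this]
        have h4 := card_filter_lt n k hkn
        simp only [Finset.card_univ, Fintype.card_fin] at h3
        omega
      have h5 : n - k ≤ k := by omega
      have := h1.trans (h2.trans_le h5)
      exact_mod_cast this
    have hPpos : (0:ℝ) ≤ ((s.filter fun j => x j = 1).card : ℝ) := by positivity
    have hNpos : (0:ℝ) ≤ ((s.filter fun j => x j = -1).card : ℝ) := by positivity
    rw [abs_le]; constructor <;> linarith
  · refine le_csInf ⟨_, ⟨(fun _ : Fin n => (1:ℝ)), fun j => Or.inl rfl, rfl⟩⟩ ?_
    rintro t ⟨y, hy, rfl⟩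
    set P := (Finset.univ.filter fun j : Fin n => y j = 1) with hP
    set N := (Finset.univ.filter fun j : Fin n => y j = -1) with hN
    have hPN : P.card + N.card = n := by
      have h2 : (Finset.univ.filter fun j : Fin n => ¬ y j = 1) = N := by
        apply Finset.filter_congr; intro j _
        rcases hy j with h' | h' <;> simp [h'] <;> norm_num
      have h3 := Finset.card_filter_add_card_filter_not
        (s := (Finset.univ : Finset (Fin n))) (p := fun j : Fin n => y j = 1)
      rw [h2] at h3
      simpa using h3
    have hb : BddAbove (Set.range fun i => |(allSubsetsMatrix n).mulVec y i|) :=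
      (Set.finite_range _).bddAbove
    have key : ∀ s : Finset (Fin n), |(allSubsetsMatrix n).mulVec y s|
        ≤ ⨆ i, |(allSubsetsMatrix n).mulVec y i| := fun s => le_ciSup hb s
    have hPle : (P.card : ℝ) ≤ ⨆ i, |(allSubsetsMatrix n).mulVec y i| := by
      refine le_trans ?_ (key P)
      rw [mulVec_eq, sum_pm y hy P]
      have e1 : P.filter (fun j => y j = 1) = P := by
        rw [hP, Finset.filter_filter]; apply Finset.filter_congr; intro j _; tauto
      have e2 : P.filter (fun j => y j = -1) = ∅ := by
        rw [hP, Finset.filter_filter]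
        apply Finset.filter_false_of_mem; intro j _
        rintro ⟨h1, h2⟩; rw [h1] at h2; norm_num at h2
      rw [e1, e2]
      simp [le_abs_self]
    have hNle : (N.card : ℝ) ≤ ⨆ i, |(allSubsetsMatrix n).mulVec y i| := by
      refine le_trans ?_ (key N)
      rw [mulVec_eq, sum_pm y hy N]
      have e1 : N.filter (fun j => y j = -1) = N := by
        rw [hN, Finset.filter_filter]; apply Finset.filter_congr; intro j _; tauto
      have e2 : N.filter (fun j => y j = 1) = ∅ := by
        rw [hN, Finset.filter_filter]
        apply Finset.filter_false_of_mem; intro j _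
        rintro ⟨h1, h2⟩; rw [h1] at h2; norm_num at h2
      rw [e1, e2]
      simp only [Finset.card_empty, Nat.cast_zero, zero_sub, abs_neg]
      exact le_abs_self _
    rcases le_total P.card N.card with h | h
    · exact le_trans (Nat.cast_le.mpr (show k ≤ N.card by omega)) hNle
    · exact le_trans (Nat.cast_le.mpr (show k ≤ P.card by omega)) hPle


lemma gamma2_nonneg {m n : Type*} [Fintype m] [Fintype n] (A : Matrix m n ℝ) :
    0 ≤ gamma2 A := by
  apply Real.sInf_nonneg
  rintro t ⟨k, B, C, -, rfl⟩
  exact mul_nonneg (Real.iSup_nonneg fun _ => Real.sqrt_nonneg _)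
    (Real.iSup_nonneg fun _ => Real.sqrt_nonneg _)

lemma gamma2_le (n : ℕ) : gamma2 (allSubsetsMatrix n) ≤ Real.sqrt n := by
  have hbdd : BddBelow {t | ∃ (k : ℕ) (B : Matrix (Finset (Fin n)) (Fin k) ℝ)
      (C : Matrix (Fin k) (Fin n) ℝ), allSubsetsMatrix n = B * C
      ∧ t = rowNorm B * colNorm C} := by
    refine ⟨0, ?_⟩
    rintro t ⟨k, B, C, -, rfl⟩
    exact mul_nonneg (Real.iSup_nonneg fun _ => Real.sqrt_nonneg _)
      (Real.iSup_nonneg fun _ => Real.sqrt_nonneg _)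
  refine csInf_le_of_le hbdd
    ⟨n, allSubsetsMatrix n, 1, (Matrix.mul_one _).symm, rfl⟩ ?_
  have hrow : rowNorm (allSubsetsMatrix n) ≤ Real.sqrt n := by
    refine Real.iSup_le (fun s => ?_) (Real.sqrt_nonneg _)
    apply Real.sqrt_le_sqrt
    calc ∑ j, (allSubsetsMatrix n) s j ^ 2 ≤ ∑ _j : Fin n, (1:ℝ) := by
          apply Finset.sum_le_sum
          intro j _
          by_cases h : j ∈ s <;> simp [allSubsetsMatrix, h]
      _ = n := by simp
  have hcol : colNorm (1 : Matrix (Fin n) (Fin n) ℝ) ≤ 1 := by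
    refine Real.iSup_le (fun j => ?_) zero_le_one
    have : ∑ i, (1 : Matrix (Fin n) (Fin n) ℝ) i j ^ 2 = 1 := by
      simp [Matrix.one_apply, ite_pow, Finset.sum_ite_eq]
    rw [this, Real.sqrt_one]
  have h0 : 0 ≤ colNorm (1 : Matrix (Fin n) (Fin n) ℝ) :=
    Real.iSup_nonneg fun _ => Real.sqrt_nonneg _
  calc rowNorm (allSubsetsMatrix n) * colNorm (1 : Matrix (Fin n) (Fin n) ℝ)
      ≤ Real.sqrt n * 1 := by
        apply mul_le_mul hrow hcol h0 (Real.sqrt_nonneg _)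
    _ = Real.sqrt n := mul_one _

lemma ceil_half (n : ℕ) : ((⌈(n : ℝ) / 2⌉ : ℤ) : ℝ) = (((n+1)/2 : ℕ) : ℝ) := by
  have hA : (((n+1)/2 : ℕ) : ℝ) * 2 ≤ (n:ℝ) + 1 := by
    exact_mod_cast (by omega : ((n+1)/2)*2 ≤ n+1)
  have hB : (n:ℝ) ≤ (((n+1)/2 : ℕ) : ℝ) * 2 := by
    exact_mod_cast (by omega : n ≤ ((n+1)/2)*2)
  have hz : (((((n+1)/2 : ℕ) : ℤ)) : ℝ) = (((n+1)/2 : ℕ) : ℝ) := by norm_cast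
  have : ⌈(n : ℝ) / 2⌉ = (((n+1)/2 : ℕ) : ℤ) := by
    rw [Int.ceil_eq_iff]
    constructor
    · rw [hz]; linarith
    · rw [hz]; linarith
  rw [this, hz]

/-- the discrepancy of the system of all subsets of `[n]` equals
`⌈n/2⌉`; its incidence matrix satisfies `γ₂ ≤ √n`, and consequently
`disc ≥ Ω(√(log m))·γ₂` with `m = 2ⁿ` rows. -/
theorem disc_all_subsets :
    (∀ n : ℕ, disc (allSubsetsMatrix n) = ((⌈(n : ℝ) / 2⌉ : ℤ) : ℝ) ∧
      gamma2 (allSubsetsMatrix n) ≤ Real.sqrt n) ∧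
    ∃ c : ℝ, 0 < c ∧ ∀ n : ℕ, 1 ≤ n →
      c * Real.sqrt (Real.log ((2 : ℝ) ^ n)) * gamma2 (allSubsetsMatrix n) ≤
        disc (allSubsetsMatrix n) := by
  have hlog : 0 < Real.log 2 := Real.log_pos (by norm_num)
  have hL : 0 < Real.sqrt (Real.log 2) := Real.sqrt_pos.mpr hlog
  constructor
  · intro n
    exact ⟨(disc_eq n).trans (ceil_half n).symm, gamma2_le n⟩
  · refine ⟨1 / (2 * Real.sqrt (Real.log 2)), by positivity, fun n hn => ?_⟩
    set c := 1 / (2 * Real.sqrt (Real.log 2)) with hc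
    have hsqrt : Real.sqrt (Real.log ((2:ℝ) ^ n))
        = Real.sqrt n * Real.sqrt (Real.log 2) := by
      rw [Real.log_pow, Real.sqrt_mul (by positivity)]
    have hfac : 0 ≤ c * Real.sqrt (Real.log ((2:ℝ) ^ n)) := by
      rw [hsqrt]; positivity
    calc c * Real.sqrt (Real.log ((2:ℝ) ^ n)) * gamma2 (allSubsetsMatrix n)
        ≤ c * Real.sqrt (Real.log ((2:ℝ) ^ n)) * Real.sqrt n :=
          mul_le_mul_of_nonneg_left (gamma2_le n) hfac
      _ = (n : ℝ) / 2 := by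
          rw [hsqrt, hc]
          have hs : Real.sqrt n * Real.sqrt n = n := Real.mul_self_sqrt (by positivity)
          field_simp
          nlinarith [hs, hL]
      _ ≤ disc (allSubsetsMatrix n) := by
          rw [disc_eq n]
          have : n ≤ 2 * ((n+1)/2) := by omega
          have : (n:ℝ) ≤ 2 * (((n+1)/2 : ℕ) : ℝ) := by exact_mod_cast this
          linarith
end
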